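/- arXiv:2206.08908 — 2 statements merged into one kernel-verified Lean document; each statement's English description precedes it below -/
import Mathlib

section
/- Let c₀, c₁, c₂ > 0 and λ₀, λ₁, λ₂ > 0 with λ₀ + λ₁ + λ₂ = 1, and let α(0), α(1), α(2) ∈ ℝ² with β = λ₀·α(0) + λ₁·α(1) + λ₂·α(2). Define Θ = (c₀/λ₀)^{λ₀}·(c₁/λ₁)^{λ₁}·(c₂/λ₂)^{λ₂}. If a real coefficient c_β satisfies c_β ≥ −Θ, then for all x, y > 0: c₀·x^{α(0)₁}·y^{α(0)₂} + c₁·x^{α(1)₁}·y^{α(1)₂} + c₂·x^{α(2)₁}·y^{α(2)₂} + c_β·x^{β₁}·y^{β₂} ≥ 0. -/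
open Real

theorem circuit_nonneg
    (c₀ c₁ c₂ l₀ l₁ l₂ : ℝ)
    (hc₀ : 0 < c₀) (hc₁ : 0 < c₁) (hc₂ : 0 < c₂)
    (hl₀ : 0 < l₀) (hl₁ : 0 < l₁) (hl₂ : 0 < l₂)
    (hsum : l₀ + l₁ + l₂ = 1)
    (α₀ α₁ α₂ β : ℝ × ℝ)
    (hβ : β = l₀ • α₀ + l₁ • α₁ + l₂ • α₂)
    (cβ : ℝ)
    (hcβ : cβ ≥ -((c₀ / l₀) ^ l₀ * (c₁ / l₁) ^ l₁ * (c₂ / l₂) ^ l₂)) :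
    ∀ x y : ℝ, 0 < x → 0 < y →
      0 ≤ c₀ * x ^ α₀.1 * y ^ α₀.2 + c₁ * x ^ α₁.1 * y ^ α₁.2 +
          c₂ * x ^ α₂.1 * y ^ α₂.2 + cβ * x ^ β.1 * y ^ β.2 := by
  intro x y hx hy
  have hβ1 : β.1 = l₀ * α₀.1 + l₁ * α₁.1 + l₂ * α₂.1 := by simp [hβ]
  have hβ2 : β.2 = l₀ * α₀.2 + l₁ * α₁.2 + l₂ * α₂.2 := by simp [hβ]
  set t₀ := c₀ / l₀ * x ^ α₀.1 * y ^ α₀.2 with ht₀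
  set t₁ := c₁ / l₁ * x ^ α₁.1 * y ^ α₁.2 with ht₁
  set t₂ := c₂ / l₂ * x ^ α₂.1 * y ^ α₂.2 with ht₂
  have hp₀ : 0 ≤ t₀ := by positivity
  have hp₁ : 0 ≤ t₁ := by positivity
  have hp₂ : 0 ≤ t₂ := by positivity
  have hgm := Real.geom_mean_le_arith_mean3_weighted hl₀.le hl₁.le hl₂.le hp₀ hp₁ hp₂ hsum
  have ex0 : (x ^ α₀.1) ^ l₀ = x ^ (l₀ * α₀.1) := by rw [← Real.rpow_mul hx.le, mul_comm]
  have ex1 : (x ^ α₁.1) ^ l₁ = x ^ (l₁ * α₁.1) := by rw [← Real.rpow_mul hx.le, mul_comm]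
  have ex2 : (x ^ α₂.1) ^ l₂ = x ^ (l₂ * α₂.1) := by rw [← Real.rpow_mul hx.le, mul_comm]
  have ey0 : (y ^ α₀.2) ^ l₀ = y ^ (l₀ * α₀.2) := by rw [← Real.rpow_mul hy.le, mul_comm]
  have ey1 : (y ^ α₁.2) ^ l₁ = y ^ (l₁ * α₁.2) := by rw [← Real.rpow_mul hy.le, mul_comm]
  have ey2 : (y ^ α₂.2) ^ l₂ = y ^ (l₂ * α₂.2) := by rw [← Real.rpow_mul hy.le, mul_comm]
  have key : t₀ ^ l₀ * t₁ ^ l₁ * t₂ ^ l₂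
      = (c₀ / l₀) ^ l₀ * (c₁ / l₁) ^ l₁ * (c₂ / l₂) ^ l₂ * (x ^ β.1 * y ^ β.2) := by
    rw [ht₀, ht₁, ht₂, hβ1, hβ2,
      Real.mul_rpow (by positivity) (by positivity),
      Real.mul_rpow (by positivity) (by positivity),
      Real.mul_rpow (by positivity) (by positivity),
      Real.mul_rpow (by positivity) (by positivity),
      Real.mul_rpow (by positivity) (by positivity),
      Real.mul_rpow (by positivity) (by positivity),
      ex0, ex1, ex2, ey0, ey1, ey2,
      Real.rpow_add hx, Real.rpow_add hx, Real.rpow_add hy, Real.rpow_add hy]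
    ring
  have h0 : l₀ * t₀ = c₀ * x ^ α₀.1 * y ^ α₀.2 := by
    rw [ht₀]; field_simp
  have h1 : l₁ * t₁ = c₁ * x ^ α₁.1 * y ^ α₁.2 := by
    rw [ht₁]; field_simp
  have h2 : l₂ * t₂ = c₂ * x ^ α₂.1 * y ^ α₂.2 := by
    rw [ht₂]; field_simp
  have hxy : (0:ℝ) < x ^ β.1 * y ^ β.2 := by positivity
  have hcβ' : -((c₀ / l₀) ^ l₀ * (c₁ / l₁) ^ l₁ * (c₂ / l₂) ^ l₂) * (x ^ β.1 * y ^ β.2)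
      ≤ cβ * (x ^ β.1 * y ^ β.2) := mul_le_mul_of_nonneg_right hcβ hxy.le
  rw [key] at hgm
  linarith [hgm, hcβ', h0, h1, h2]
end

section
/- Let f : ℝ^m → ℝ be a finite sum f(x) = Σ_α c_α·x^α of monomials with real exponents evaluated on the positive orthant, let ω ∈ ℝ^m, and suppose there is a unique exponent α* maximizing ω·α among those with c_α ≠ 0, and c_{α*} < 0. Then for any fixed x ∈ ℝ^m_{>0}, there exists t₀ > 0 such that for all t > t₀, f(x₁t^{ω₁}, …, x_mt^{ω_m}) < 0. -/
open Real Filter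

theorem vertex_negative_dominates (m : ℕ) (ι : Type*) [Fintype ι]
    (c : ι → ℝ) (α : ι → Fin m → ℝ) (ω : Fin m → ℝ) (i₀ : ι)
    (hc₀ : c i₀ < 0)
    (hmax : ∀ i : ι, c i ≠ 0 → i ≠ i₀ →
      (∑ k, ω k * α i k) < (∑ k, ω k * α i₀ k)) :
    ∀ x : Fin m → ℝ, (∀ k, 0 < x k) →
      ∃ t₀ : ℝ, 0 < t₀ ∧ ∀ t : ℝ, t₀ < t →
        (∑ i : ι, c i * ∏ k, (x k * t ^ (ω k)) ^ (α i k)) < 0 := by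
  classical
  intro x hx
  set e : ι → ℝ := fun i => ∑ k, ω k * α i k with he
  set P : ι → ℝ := fun i => ∏ k, x k ^ (α i k) with hP
  have hPpos : ∀ i, 0 < P i := fun i =>
    Finset.prod_pos fun k _ => Real.rpow_pos_of_pos (hx k) _
  -- the rescaled sum tends to c i₀ * P i₀ < 0
  have hlim : Tendsto (fun t : ℝ => ∑ i, c i * P i * t ^ (e i - e i₀)) atTop
      (nhds (c i₀ * P i₀)) := by
    have hsum : (∑ i : ι, if i = i₀ then c i₀ * P i₀ else 0) = c i₀ * P i₀ := by
      simp
    rw [← hsum]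
    apply tendsto_finset_sum
    intro i _
    by_cases hi : i = i₀
    · subst hi
      simp only [if_pos rfl, sub_self]
      have : ∀ t : ℝ, c i * P i * t ^ (0 : ℝ) = c i * P i := by
        intro t; rw [Real.rpow_zero, mul_one]
      simp only [this]; exact tendsto_const_nhds
    · rw [if_neg hi]
      by_cases hci : c i = 0
      · simp [hci]
      · have hd : e i - e i₀ < 0 := sub_neg.2 (hmax i hci hi)
        have h0 : Tendsto (fun t : ℝ => t ^ (e i - e i₀)) atTop (nhds 0) := by
          have := tendsto_rpow_neg_atTop (y := -(e i - e i₀)) (by linarith)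
          simpa using this
        have := (h0.const_mul (c i * P i))
        simpa using this
  have hneg : c i₀ * P i₀ < 0 := mul_neg_of_neg_of_pos hc₀ (hPpos i₀)
  have hev : ∀ᶠ t : ℝ in atTop, (∑ i, c i * P i * t ^ (e i - e i₀)) < 0 :=
    hlim.eventually_lt_const hneg
  rcases (eventually_atTop.mp hev) with ⟨a, ha⟩
  refine ⟨max a 1, lt_of_lt_of_le zero_lt_one (le_max_right _ _), ?_⟩
  intro t ht
  have ht1 : (1 : ℝ) < t := lt_of_le_of_lt (le_max_right a 1) ht
  have htpos : 0 < t := lt_trans zero_lt_one ht1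
  have hta : a ≤ t := le_of_lt (lt_of_le_of_lt (le_max_left a 1) ht)
  have hkey : (∑ i : ι, c i * ∏ k, (x k * t ^ (ω k)) ^ (α i k))
      = (∑ i, c i * P i * t ^ (e i - e i₀)) * t ^ (e i₀) := by
    rw [Finset.sum_mul]
    apply Finset.sum_congr rfl
    intro i _
    have hprod : (∏ k, (x k * t ^ (ω k)) ^ (α i k)) = P i * t ^ (e i) := by
      have : ∀ k : Fin m, (x k * t ^ (ω k)) ^ (α i k)
          = x k ^ (α i k) * t ^ (ω k * α i k) := by
        intro k
        rw [Real.mul_rpow (le_of_lt (hx k))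
          (le_of_lt (Real.rpow_pos_of_pos htpos _)),
          ← Real.rpow_mul (le_of_lt htpos)]
      rw [Finset.prod_congr rfl (fun k _ => this k), Finset.prod_mul_distrib]
      congr 1
      rw [he, Real.rpow_sum_of_pos htpos]
    rw [hprod, show e i = (e i - e i₀) + e i₀ by ring, Real.rpow_add htpos]
    ring_nf
  rw [hkey]
  exact mul_neg_of_neg_of_pos (ha t hta) (Real.rpow_pos_of_pos htpos _)
end
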